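/- If m ≥ 2, n ≥ 1, and there exists a surjective homomorphism from the surface group π₁(Σ_h) onto the free product F_n * ℤ_m, then h ≥ n + 1. -/

import Mathlib

/-- The commutator `x⁻¹ y⁻¹ x y`. -/
def commE {G : Type*} [Group G] (x y : G) : G := x⁻¹ * y⁻¹ * x * y

/-- The surface relator `[a₁,b₁]⋯[a_g,b_g]` in the free group on `a₁,…,a_g,b₁,…,b_g`. -/
def surfaceRel (g : ℕ) : FreeGroup (Fin g ⊕ Fin g) :=
  (List.ofFn fun i : Fin g =>
    commE (FreeGroup.of (Sum.inl i)) (FreeGroup.of (Sum.inr i))).prod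

/-- The fundamental group of the closed orientable surface of genus `g`. -/
abbrev SurfaceGroup (g : ℕ) : Type := PresentedGroup {surfaceRel g}

/-!
Fix a prime `p ∣ m` and consider characters, i.e. homomorphisms to `𝔽_p`. Pulling back along `φ`
and evaluating at the generators `aᵢ, bᵢ` embeds the `(n+1)`-dimensional space of characters of
`F_n ∗ ℤ_m` into `𝔽_p^{2h}`. The image is isotropic for the alternating form
`ω(u, v) = ∑ (u(aᵢ) v(bᵢ) - u(bᵢ) v(aᵢ))`: if `α` kills `ℤ_m`, then `(α, β)` lifts to a homomorphism
into the Heisenberg group over `𝔽_p`, where the image of the surface relator `∏ [aᵢ, bᵢ] = 1` is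
the central element with coordinate `ω(α, β)`; such `α` form a hyperplane, and an alternating form
vanishing on a hyperplane times the whole space vanishes. An isotropic subspace of a nondegenerate
`2h`-dimensional space has dimension at most `h`.
-/

open Monoid

/-- Coordinates of the upper unitriangular matrix `!![1, x, z; 0, 1, y; 0, 0, 1]`. -/
@[ext]
structure Heisenberg (R : Type*) where
  x : R
  y : R
  z : R

namespace Heisenberg

variable {R : Type*} [CommRing R]

instance : Mul (Heisenberg R) := ⟨fun a b => ⟨a.x + b.x, a.y + b.y, a.z + b.z + a.x * b.y⟩⟩
instance : One (Heisenberg R) := ⟨⟨0, 0, 0⟩⟩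
instance : Inv (Heisenberg R) := ⟨fun a => ⟨-a.x, -a.y, -a.z + a.x * a.y⟩⟩

@[simp] lemma mul_x (a b : Heisenberg R) : (a * b).x = a.x + b.x := rfl
@[simp] lemma mul_y (a b : Heisenberg R) : (a * b).y = a.y + b.y := rfl
@[simp] lemma mul_z (a b : Heisenberg R) : (a * b).z = a.z + b.z + a.x * b.y := rfl
@[simp] lemma one_x : (1 : Heisenberg R).x = 0 := rfl
@[simp] lemma one_y : (1 : Heisenberg R).y = 0 := rfl
@[simp] lemma one_z : (1 : Heisenberg R).z = 0 := rfl
@[simp] lemma inv_x (a : Heisenberg R) : a⁻¹.x = -a.x := rfl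
@[simp] lemma inv_y (a : Heisenberg R) : a⁻¹.y = -a.y := rfl
@[simp] lemma inv_z (a : Heisenberg R) : a⁻¹.z = -a.z + a.x * a.y := rfl

instance : Group (Heisenberg R) where
  mul_assoc a b c := by ext <;> simp <;> ring
  one_mul a := by ext <;> simp
  mul_one a := by ext <;> simp
  inv_mul_cancel a := by ext <;> simp

def xHom : Heisenberg R →* Multiplicative R where
  toFun a := .ofAdd a.x
  map_one' := rfl
  map_mul' _ _ := rfl

def yHom : Heisenberg R →* Multiplicative R where
  toFun a := .ofAdd a.y
  map_one' := rfl
  map_mul' _ _ := rfl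

def centralHom : Multiplicative R →* Heisenberg R where
  toFun t := ⟨0, 0, t.toAdd⟩
  map_one' := rfl
  map_mul' _ _ := by ext <;> simp

lemma centralHom_injective : Function.Injective (centralHom (R := R)) :=
  fun _ _ h => congrArg Heisenberg.z h

lemma commE_eq_centralHom (a b : Heisenberg R) :
    commE a b = centralHom (.ofAdd (a.x * b.y - b.x * a.y)) := by
  ext <;> simp [commE, centralHom]; ring

theorem sum_eq_zero_of_prod_commE_eq_one {g : ℕ} (a b : Fin g → Heisenberg R)
    (h : (List.ofFn fun i => commE (a i) (b i)).prod = 1) :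
    ∑ i, ((a i).x * (b i).y - (b i).x * (a i).y) = 0 := by
  simp only [commE_eq_centralHom] at h
  rw [← Function.comp_def centralHom, ← List.map_ofFn, ← map_list_prod,
    ← map_one centralHom] at h
  simpa [List.sum_ofFn] using congrArg Multiplicative.toAdd (centralHom_injective h)

end Heisenberg

lemma MonoidHom.map_commE {G H : Type*} [Group G] [Group H] (f : G →* H) (a b : G) :
    f (commE a b) = commE (f a) (f b) := by
  simp [commE]

theorem SurfaceGroup.prod_commE_map_eq_one {g : ℕ} {G : Type*} [Group G]
    (σ : SurfaceGroup g →* G) :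
    (List.ofFn fun i => commE (σ (.of (.inl i))) (σ (.of (.inr i)))).prod = 1 := by
  have hrel : PresentedGroup.mk {surfaceRel g} (List.ofFn fun i : Fin g =>
      commE (FreeGroup.of (Sum.inl i)) (FreeGroup.of (Sum.inr i))).prod = 1 :=
    PresentedGroup.mk_eq_one_iff.mpr (Subgroup.subset_normalClosure rfl)
  have := congrArg σ hrel
  rw [map_one, ← MonoidHom.comp_apply, map_list_prod, List.map_ofFn] at this
  simpa [Function.comp_def, MonoidHom.map_commE, PresentedGroup.of] using this

theorem Subgroup.closure_range_comp_eq_top {G H ι : Type*} [Group G] [Group H] {a : ι → G}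
    (ha : Subgroup.closure (Set.range a) = ⊤) {f : G →* H} (hf : Function.Surjective f) :
    Subgroup.closure (Set.range (f ∘ a)) = ⊤ := by
  rw [Set.range_comp, ← MonoidHom.map_closure, ha, ← MonoidHom.range_eq_map,
    MonoidHom.range_eq_top.mpr hf]

section Characters

variable {G : Type*} [Group G] (R : Type*) [CommRing R]

def evalChars {ι : Type*} (a : ι → G) : (Additive G →+ R) →ₗ[R] (ι → R) where
  toFun α i := α (.ofMul (a i))
  map_add' _ _ := rfl
  map_smul' _ _ := rfl

variable {R}

theorem evalChars_injective {ι : Type*} {a : ι → G} (ha : Subgroup.closure (Set.range a) = ⊤) :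
    Function.Injective (evalChars R a) := by
  intro α β hαβ
  apply AddMonoidHom.toMultiplicativeRight.injective
  refine MonoidHom.eq_of_eqOn_dense ha ?_
  rintro _ ⟨i, rfl⟩
  exact congrArg Multiplicative.ofAdd (congrFun hαβ i)

theorem Monoid.Coprod.exists_heisenberg_lift {ι H : Type*} [Group H]
    (α β : Additive (Coprod (FreeGroup ι) H) →+ R) (hα : ∀ t, α (.ofMul (inr t)) = 0) :
    ∃ s : Coprod (FreeGroup ι) H →* Heisenberg R,
      ∀ g, (s g).x = α (.ofMul g) ∧ (s g).y = β (.ofMul g) := by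
  let sH : H →* Heisenberg R :=
    { toFun t := ⟨0, β (.ofMul (inr t)), 0⟩
      map_one' := by ext <;> simp
      map_mul' t u := by ext <;> simp }
  let s := lift (FreeGroup.lift fun i => ⟨α (.ofMul (inl (.of i))), β (.ofMul (inl (.of i))), 0⟩) sH
  have hx : Heisenberg.xHom.comp s = α.toMultiplicativeRight := by
    refine hom_ext (FreeGroup.ext_hom _ _ fun i => ?_) (MonoidHom.ext fun t => ?_) <;>
      simp [Heisenberg.xHom, s, sH, hα]
  have hy : Heisenberg.yHom.comp s = β.toMultiplicativeRight := by
    refine hom_ext (FreeGroup.ext_hom _ _ fun i => ?_) (MonoidHom.ext fun t => ?_) <;>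
      simp [Heisenberg.yHom, s, sH]
  exact ⟨s, fun g => ⟨congrArg Multiplicative.toAdd (DFunLike.congr_fun hx g),
    congrArg Multiplicative.toAdd (DFunLike.congr_fun hy g)⟩⟩

end Characters

theorem Monoid.Coprod.apply_inr_eq_zero_of_apply_inr_ofAdd_one {M A : Type*} [Group M]
    [AddCommGroup A] {m : ℕ} (α : Additive (Coprod M (Multiplicative (ZMod m))) →+ A)
    (hα : α (.ofMul (inr (.ofAdd 1))) = 0) (t : Multiplicative (ZMod m)) :
    α (.ofMul (inr t)) = 0 := by
  obtain ⟨k, hk⟩ := ZMod.intCast_surjective t.toAdd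
  have ht : t = Multiplicative.ofAdd 1 ^ k := by
    rw [← ofAdd_zsmul, zsmul_one, hk, ofAdd_toAdd]
  rw [ht, map_zpow, ofMul_zpow, map_zsmul, hα, smul_zero]

def coprodGens (n m : ℕ) : Fin n ⊕ Unit → Coprod (FreeGroup (Fin n)) (Multiplicative (ZMod m)) :=
  Sum.elim (fun i => Coprod.inl (.of i)) fun _ => Coprod.inr (.ofAdd 1)

theorem evalChars_coprodGens_surjective {n m p : ℕ} (hpm : p ∣ m) :
    Function.Surjective (evalChars (ZMod p) (coprodGens n m)) := by
  intro c
  let χ := Coprod.lift (FreeGroup.lift fun i => Multiplicative.ofAdd (c (.inl i)))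
    (AddMonoidHom.toMultiplicative (c (.inr ()) • (ZMod.castHom hpm (ZMod p)).toAddMonoidHom))
  refine ⟨AddMonoidHom.toMultiplicativeRight.symm χ, funext ?_⟩
  rintro (i | ⟨⟨⟩⟩) <;> simp [evalChars, coprodGens, χ, ZMod.cast_one hpm]

section SymplecticForm

open Matrix

variable {ι K : Type*} [Fintype ι] [DecidableEq ι]

theorem Matrix.toBilin'_J_apply [CommRing K] (u v : ι ⊕ ι → K) :
    toBilin' (J ι K) u v = ∑ i, (u (.inr i) * v (.inl i) - u (.inl i) * v (.inr i)) := by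
  simp [toBilin'_apply', J, dotProduct, fromBlocks_mulVec, neg_mulVec, Fintype.sum_sum_type,
    Finset.sum_sub_distrib, mul_comm]
  ring

theorem Matrix.isAlt_toBilin'_J [CommRing K] : (toBilin' (J ι K)).IsAlt := by
  intro u
  simp [toBilin'_J_apply, mul_comm]

theorem Matrix.nondegenerate_toBilin'_J [Field K] : (toBilin' (J ι K)).Nondegenerate :=
  LinearMap.BilinForm.nondegenerate_toBilin'_of_det_ne_zero' _ (isUnit_det_J ι K).ne_zero

end SymplecticForm

theorem LinearMap.IsAlt.eq_zero_of_forall_mem_ker {K V : Type*} [Field K] [AddCommGroup V]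
    [Module K V] {S : LinearMap.BilinForm K V} (hS : S.IsAlt) (f : V →ₗ[K] K)
    (hf : ∀ u, f u = 0 → ∀ v, S u v = 0) (u v : V) : S u v = 0 := by
  by_cases hv : f v = 0
  · exact hS.eq_iff.mpr (hf v hv u)
  · have hw : f (u - (f u / f v) • v) = 0 := by
      rw [map_sub, map_smul, smul_eq_mul, div_mul_cancel₀ _ hv, sub_self]
    have := hf _ hw v
    rwa [map_sub, map_smul, LinearMap.sub_apply, LinearMap.smul_apply, hS.self_eq_zero,
      smul_zero, sub_zero] at this

theorem LinearMap.BilinForm.two_mul_finrank_le_of_le_orthogonal {K V : Type*} [Field K]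
    [AddCommGroup V] [Module K V] [FiniteDimensional K V] {B : LinearMap.BilinForm K V}
    (hB : B.Nondegenerate) {W : Submodule K V} (hW : W ≤ B.orthogonal W) :
    2 * Module.finrank K W ≤ Module.finrank K V := by
  have := Submodule.finrank_mono hW
  rw [LinearMap.BilinForm.finrank_orthogonal hB] at this
  have := Submodule.finrank_le W
  omega

theorem SurfaceGroup.toBilin'_J_evalChars_eq_zero {g m : ℕ} {ι K : Type*} [Field K]
    (σ : SurfaceGroup g →* Coprod (FreeGroup ι) (Multiplicative (ZMod m)))
    (α β : Additive (Coprod (FreeGroup ι) (Multiplicative (ZMod m))) →+ K) :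
    Matrix.toBilin' (Matrix.J (Fin g) K) (evalChars K (fun v => σ (.of v)) α)
      (evalChars K (fun v => σ (.of v)) β) = 0 := by
  let T := evalChars K fun v => σ (.of v)
  let atGen := LinearMap.proj () ∘ₗ evalChars K fun _ : Unit =>
    (Coprod.inr (.ofAdd (1 : ZMod m)) : Coprod (FreeGroup ι) (Multiplicative (ZMod m)))
  refine LinearMap.IsAlt.eq_zero_of_forall_mem_ker (S := (Matrix.toBilin' _).compl₁₂ T T)
    (fun α => Matrix.isAlt_toBilin'_J _) atGen (fun α hα β => ?_) α β
  obtain ⟨s, hs⟩ := Coprod.exists_heisenberg_lift α β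
    (Coprod.apply_inr_eq_zero_of_apply_inr_ofAdd_one α hα)
  have hrel := Heisenberg.sum_eq_zero_of_prod_commE_eq_one _ _
    (SurfaceGroup.prod_commE_map_eq_one (s.comp σ))
  simp only [MonoidHom.comp_apply, hs] at hrel
  rw [LinearMap.compl₁₂_apply, Matrix.toBilin'_J_apply, ← neg_eq_zero, ← Finset.sum_neg_distrib,
    ← hrel]
  refine Finset.sum_congr rfl fun i _ => ?_
  simp only [T, evalChars, LinearMap.coe_mk, AddHom.coe_mk]
  ring

open Monoid in
theorem genus_ge_of_surjects_onto_free_product_general (h n m : ℕ) (hm : 2 ≤ m)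
    (φ : SurfaceGroup h →* Coprod (FreeGroup (Fin n)) (Multiplicative (ZMod m)))
    (hφ : Function.Surjective φ) :
    n + 1 ≤ h := by
  obtain ⟨p, hp, hpm⟩ := Nat.exists_prime_and_dvd (show m ≠ 1 by omega)
  have : Fact p.Prime := ⟨hp⟩
  let T := evalChars (ZMod p) fun v => φ (.of v)
  have hT : Function.Injective T :=
    evalChars_injective (Subgroup.closure_range_comp_eq_top (PresentedGroup.closure_range_of _) hφ)
  have := FiniteDimensional.of_injective T hT
  have hW : LinearMap.range T ≤
      (Matrix.toBilin' (Matrix.J (Fin h) (ZMod p))).orthogonal (LinearMap.range T) := by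
    rintro _ ⟨β, rfl⟩ _ ⟨α, rfl⟩
    exact SurfaceGroup.toBilin'_J_evalChars_eq_zero φ α β
  have hWdim := LinearMap.BilinForm.two_mul_finrank_le_of_le_orthogonal
    Matrix.nondegenerate_toBilin'_J hW
  have hchar := LinearMap.finrank_le_finrank_of_surjective
    (evalChars_coprodGens_surjective (n := n) hpm)
  rw [LinearMap.finrank_range_of_inj hT] at hWdim
  simp only [Module.finrank_fintype_fun_eq_card, Fintype.card_sum, Fintype.card_fin,
    Fintype.card_unit] at hWdim hchar
  omega

open Monoid in
theorem genus_ge_of_surjects_onto_free_product (h n m : ℕ) (hm : 2 ≤ m) (hn : 1 ≤ n)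
    (φ : SurfaceGroup h →* Coprod (FreeGroup (Fin n)) (Multiplicative (ZMod m)))
    (hφ : Function.Surjective φ) :
    n + 1 ≤ h :=
  genus_ge_of_surjects_onto_free_product_general h n m hm φ hφ
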